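/- Let f ∈ L¹(𝕋ⁿ), let v₁, …, v_d ∈ ℤⁿ be linearly independent, and let k ∈ ℤⁿ. Then R f ∈ L¹(𝕋ⁿ) and \widehat{R f}(k) = f̂(k) if k·vᵢ = 0 for all i = 1, …, d, while \widehat{R f}(k) = 0 otherwise. -/

import Mathlib

noncomputable section
open MeasureTheory Real
open scoped ENNReal NNReal

instance : Fact ((0:ℝ) < 1) := ⟨one_pos⟩

/-- The flat torus `𝕋ⁿ = ℝⁿ/ℤⁿ`, with the probability Haar (Lebesgue) measure. -/
abbrev Torus (n : ℕ) := Fin n → AddCircle (1:ℝ)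

/-- The quotient map `π : ℝⁿ → 𝕋ⁿ`. -/
def tmap {n : ℕ} (x : Fin n → ℝ) : Torus n := fun i => (x i : AddCircle (1:ℝ))

/-- The character `x ↦ e^{2πi k·x}` on the torus. -/
def char {n : ℕ} (k : Fin n → ℤ) (x : Torus n) : ℂ := ∏ i, fourier (k i) (x i)

/-- The Fourier coefficient `f̂(k) = ∫ f(x) e^{−2πi k·x} dx`. -/
def fCoeff {n : ℕ} (f : Torus n → ℂ) (k : Fin n → ℤ) : ℂ := ∫ x, char (-k) x * f x

/-- The `d`-plane Radon transform on `𝕋ⁿ` associated to integer vectors `v₁, …, v_d`: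
`R f(x) = ∫_{[0,1]^d} f(x + t₁v₁ + ⋯ + t_d v_d) dt`. -/
def radon {n d : ℕ} (v : Fin d → Fin n → ℤ) (f : Torus n → ℂ) (x : Torus n) : ℂ :=
  ∫ t in Set.Icc (0 : Fin d → ℝ) 1, f (x + tmap fun i => ∑ j, t j * (v j i : ℝ))

/-! With `τ(t) = π(t₁v₁ + ⋯ + t_d v_d)`, the Radon transform is the average of translates
`R f(x) = ∫_{[0,1]^d} f(x + τ t) dt`. Since `(x, t) ↦ x + τ t` pushes `vol ⊗ dt` forward to `vol`,
Fubini gives `R f ∈ L¹`; translating inside the Fourier integral gives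
`(R f)^(k) = (∫ e(k·τ t) dt) f̂(k)`, and the first factor splits as
`∏ⱼ ∫₀¹ e^{2πi (k·vⱼ) s} ds = ∏ⱼ [k·vⱼ = 0]`. -/

section ShiftAverage

variable {G T E : Type*} [AddGroup G] [MeasurableSpace G] [MeasurableAdd₂ G]
  [MeasurableSpace T] {μ : Measure G} [SFinite μ] [μ.IsAddRightInvariant]
  {ν : Measure T} [IsProbabilityMeasure ν] {τ : T → G}

def shiftAverage [NormedAddCommGroup E] [NormedSpace ℝ E] (ν : Measure T) (τ : T → G)
    (f : G → E) (x : G) : E :=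
  ∫ t, f (x + τ t) ∂ν

theorem measurePreserving_add_comp_snd (hτ : Measurable τ) :
    MeasurePreserving (fun p : G × T => p.1 + τ p.2) (μ.prod ν) μ := by
  have hm : Measurable (fun p : G × T => p.1 + τ p.2) :=
    measurable_fst.add (hτ.comp measurable_snd)
  refine ⟨hm, Measure.ext fun s hs => ?_⟩
  rw [Measure.map_apply hm hs, Measure.prod_apply_symm (hm hs)]
  have hslice (t : T) : (fun x => (x, t)) ⁻¹' ((fun p : G × T => p.1 + τ p.2) ⁻¹' s) =
      (fun x => x + τ t) ⁻¹' s := rfl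
  simp [hslice, measure_preimage_add_right]

theorem MeasureTheory.Integrable.comp_add_comp_snd [NormedAddCommGroup E] {f : G → E}
    (hτ : Measurable τ) (hf : Integrable f μ) :
    Integrable (fun p : G × T => f (p.1 + τ p.2)) (μ.prod ν) :=
  ((measurePreserving_add_comp_snd hτ).integrable_comp hf.aestronglyMeasurable).2 hf

theorem integrable_shiftAverage [NormedAddCommGroup E] [NormedSpace ℝ E] {f : G → E}
    (hτ : Measurable τ) (hf : Integrable f μ) : Integrable (shiftAverage ν τ f) μ :=
  (hf.comp_add_comp_snd hτ).integral_prod_left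

theorem integral_mul_shiftAverage {𝕜 : Type*} [RCLike 𝕜] {f : G → 𝕜} {ψ : G → 𝕜}
    (hτ : Measurable τ) (hf : Integrable f μ) (hψ : AEStronglyMeasurable ψ μ)
    (hψ_bound : ∀ x, ‖ψ x‖ ≤ 1) (hψ_add : ∀ x y, ψ (x + y) = ψ x * ψ y) :
    ∫ x, ψ x * shiftAverage ν τ f x ∂μ = (∫ t, ψ (-τ t) ∂ν) * ∫ x, ψ x * f x ∂μ := by
  have hint : Integrable (fun p : G × T => ψ p.1 * f (p.1 + τ p.2)) (μ.prod ν) :=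
    (hf.comp_add_comp_snd hτ).bdd_mul hψ.comp_fst (.of_forall fun p => hψ_bound p.1)
  have htranslate (t : T) : ∫ x, ψ x * f (x + τ t) ∂μ = ψ (-τ t) * ∫ x, ψ x * f x ∂μ :=
    calc ∫ x, ψ x * f (x + τ t) ∂μ = ∫ x, ψ (-τ t) * (ψ (x + τ t) * f (x + τ t)) ∂μ := by
          congr 1
          funext x
          rw [← mul_assoc, mul_comm (ψ (-τ t)), ← hψ_add, add_neg_cancel_right]
      _ = ψ (-τ t) * ∫ x, ψ x * f x ∂μ := by
          rw [integral_const_mul, integral_add_right_eq_self (fun y => ψ y * f y)]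
  calc ∫ x, ψ x * shiftAverage ν τ f x ∂μ = ∫ x, ∫ t, ψ x * f (x + τ t) ∂ν ∂μ := by
        simp_rw [shiftAverage, integral_const_mul]
    _ = ∫ t, ∫ x, ψ x * f (x + τ t) ∂μ ∂ν := integral_integral_swap hint
    _ = (∫ t, ψ (-τ t) ∂ν) * ∫ x, ψ x * f x ∂μ := by simp_rw [htranslate, integral_mul_const]

end ShiftAverage

instance isProbabilityMeasure_restrict_Icc_pi {ι : Type*} [Fintype ι] :
    IsProbabilityMeasure (volume.restrict (Set.Icc (0 : ι → ℝ) 1)) :=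
  ⟨by simp [Real.volume_Icc_pi]⟩

theorem setIntegral_Icc_pi_prod {ι 𝕜 : Type*} [Fintype ι] [RCLike 𝕜] (a b : ι → ℝ)
    (g : ι → ℝ → 𝕜) :
    ∫ t in Set.Icc a b, ∏ j, g j (t j) = ∏ j, ∫ s in Set.Icc (a j) (b j), g j s := by
  rw [← Set.pi_univ_Icc, volume_pi, Measure.restrict_pi_pi, integral_fintype_prod_eq_prod]

theorem setIntegral_Icc_exp_two_pi_I_int_mul (m : ℤ) :
    ∫ s in Set.Icc (0 : ℝ) 1, Complex.exp (2 * π * Complex.I * m * s) = if m = 0 then 1 else 0 := by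
  rw [integral_Icc_eq_integral_Ioc, ← intervalIntegral.integral_of_le zero_le_one]
  split_ifs with hm
  · simp [hm]
  have hc : 2 * π * Complex.I * m ≠ 0 := by simp [Real.pi_ne_zero, hm]
  rw [integral_exp_mul_complex hc, Complex.ofReal_one, Complex.ofReal_zero, mul_one, mul_zero,
    mul_comm _ (m : ℂ), Complex.exp_int_mul_two_pi_mul_I, Complex.exp_zero, sub_self, zero_div]

section Torus

variable {n d : ℕ}

theorem continuous_tmap : Continuous (tmap (n := n)) :=
  continuous_pi fun i => continuous_quotient_mk'.comp (continuous_apply i)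

def planeMap (v : Fin d → Fin n → ℤ) (t : Fin d → ℝ) : Torus n :=
  tmap fun i => ∑ j, t j * (v j i : ℝ)

theorem continuous_planeMap (v : Fin d → Fin n → ℤ) : Continuous (planeMap v) :=
  continuous_tmap.comp (continuous_pi fun _ =>
    continuous_finsetSum _ fun j _ => (continuous_apply j).mul continuous_const)

theorem radon_eq_shiftAverage (v : Fin d → Fin n → ℤ) (f : Torus n → ℂ) :
    radon v f = shiftAverage (volume.restrict (Set.Icc 0 1)) (planeMap v) f :=
  rfl

theorem continuous_char (k : Fin n → ℤ) : Continuous (char k) :=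
  continuous_finsetProd _ fun i _ => (fourier (k i)).continuous.comp (continuous_apply i)

theorem norm_char (k : Fin n → ℤ) (x : Torus n) : ‖char k x‖ = 1 := by
  simp [char, norm_prod, Circle.norm_coe]

theorem char_add (k : Fin n → ℤ) (x y : Torus n) : char k (x + y) = char k x * char k y := by
  simp only [char, ← Finset.prod_mul_distrib, Pi.add_apply, fourier_apply, smul_add,
    AddCircle.toCircle_add, Circle.coe_mul]

theorem char_neg_neg (k : Fin n → ℤ) (x : Torus n) : char (-k) (-x) = char k x := by
  simp [char, fourier_apply]

theorem char_planeMap (v : Fin d → Fin n → ℤ) (k : Fin n → ℤ) (t : Fin d → ℝ) :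
    char k (planeMap v t) =
      ∏ j, Complex.exp (2 * π * Complex.I * (∑ i, k i * v j i : ℤ) * t j) := by
  simp only [char, planeMap, tmap, fourier_coe_apply, Complex.ofReal_one, div_one,
    ← Complex.exp_sum]
  congr 1
  push_cast
  simp_rw [Finset.mul_sum, Finset.sum_mul]
  rw [Finset.sum_comm]
  exact Finset.sum_congr rfl fun j _ => Finset.sum_congr rfl fun i _ => by ring

theorem setIntegral_char_planeMap (v : Fin d → Fin n → ℤ) (k : Fin n → ℤ) :
    ∫ t in Set.Icc 0 1, char k (planeMap v t) = if ∀ j, ∑ i, k i * v j i = 0 then 1 else 0 := by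
  simp_rw [char_planeMap, setIntegral_Icc_pi_prod 0 1
    (fun j s => Complex.exp (2 * π * Complex.I * (∑ i, k i * v j i : ℤ) * s)), Pi.zero_apply,
    Pi.one_apply, setIntegral_Icc_exp_two_pi_I_int_mul, Fintype.prod_ite_zero,
    Finset.prod_const_one]

theorem fCoeff_radon (v : Fin d → Fin n → ℤ) {f : Torus n → ℂ} (hf : Integrable f)
    (k : Fin n → ℤ) :
    fCoeff (radon v f) k = (if ∀ j, ∑ i, k i * v j i = 0 then 1 else 0) * fCoeff f k := by
  rw [fCoeff, radon_eq_shiftAverage,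
    integral_mul_shiftAverage (continuous_planeMap v).measurable hf
      (continuous_char _).aestronglyMeasurable (fun x => (norm_char _ x).le) (char_add _)]
  simp_rw [char_neg_neg, setIntegral_char_planeMap, fCoeff]

end Torus

theorem radon_integrable_and_fourierCoeff_general
    (n d : ℕ)
    (f : Torus n → ℂ) (hf : Integrable f (volume : Measure (Torus n)))
    (v : Fin d → Fin n → ℤ) (k : Fin n → ℤ) :
    Integrable (radon v f) (volume : Measure (Torus n)) ∧
    ((∀ j, ∑ i, k i * v j i = 0) → fCoeff (radon v f) k = fCoeff f k) ∧
    (¬ (∀ j, ∑ i, k i * v j i = 0) → fCoeff (radon v f) k = 0) :=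
  ⟨integrable_shiftAverage (continuous_planeMap v).measurable hf,
    fun h => by simp [fCoeff_radon v hf, h], fun h => by simp [fCoeff_radon v hf, h]⟩

theorem radon_integrable_and_fourierCoeff
    (n d : ℕ) (hn : 2 ≤ n) (hd1 : 1 ≤ d) (hd2 : d ≤ n - 1)
    (f : Torus n → ℂ) (hf : Integrable f (volume : Measure (Torus n)))
    (v : Fin d → Fin n → ℤ) (hv : LinearIndependent ℤ v) (k : Fin n → ℤ) :
    Integrable (radon v f) (volume : Measure (Torus n)) ∧
    ((∀ j, ∑ i, k i * v j i = 0) → fCoeff (radon v f) k = fCoeff f k) ∧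
    (¬ (∀ j, ∑ i, k i * v j i = 0) → fCoeff (radon v f) k = 0) :=
  radon_integrable_and_fourierCoeff_general n d f hf v k
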